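/- (Variant loss, approximate minimizer.) Let α, β > 0, let Σ ⊆ X, and let δ, μ, ϵ > 0 satisfy ϵ ≤ δ^α ≤ μ²/2. Assume every f ∈ K admits g ∈ Σ ∩ K with ‖f − g‖_X ≤ δ. Let f ∈ K and w := λ(f). Suppose f̃ = ι(h̃) with h̃ ∈ Y and ι(h̃) ∈ Σ satisfies ‖λ(ι(h̃)) − w‖^α + μ‖h̃‖_Y^β ≤ ‖λ(ι(h)) − w‖^α + μ‖h‖_Y^β + ϵ for every h ∈ Y with ι(h) ∈ Σ. Then, with ε := max( C₀((1+μ)^{1/β} − 1), (μ² + μ)^{1/α} ), one has ‖f − f̃‖_X ≤ ε + 2 R(K(w, 2ε))_X. -/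

import Mathlib

/-- Chebyshev radius of a set `S` in a normed space `X`:
`R(S) = inf_{z ∈ X} sup_{f ∈ S} ‖f - z‖`. -/
noncomputable def chebRad {X : Type*} [NormedAddCommGroup X] (S : Set X) : ℝ :=
  ⨅ z : X, ⨆ f : S, ‖(f : X) - z‖

/-- Weighted euclidean norm on `ℝ^m`: `‖v‖ = ( m⁻¹ ∑ v_j² )^{1/2}`. -/
noncomputable def wNorm {m : ℕ} (v : Fin m → ℝ) : ℝ :=
  Real.sqrt ((∑ j, v j ^ 2) / m)

/-!
The data fit of the approximate minimizer `f̃` is at most `(μ² + μ)^{1/α}`, and its norm at most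
`(1 + μ)^{1/β}`, because its loss is bounded by that of a `δ`-approximant of `f` from `Σ ∩ K`
plus `ϵ`, i.e. by `δ^α + μ + ϵ ≤ μ² + μ`. Rescaling `f̃` into the unit ball of `Y` moves it by at
most `C₀((1 + μ)^{1/β} − 1)` in `X`, so the rescaled point and `f` both lie in `K(w, 2ε)`, and
two points of a bounded set are at most twice its Chebyshev radius apart.
-/

section WeightedNorm

variable {m : ℕ}

lemma wNorm_nonneg (v : Fin m → ℝ) : 0 ≤ wNorm v :=
  Real.sqrt_nonneg _

lemma wNorm_eq_norm_div_sqrt (v : Fin m → ℝ) :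
    wNorm v = ‖WithLp.toLp 2 v‖ / Real.sqrt m := by
  rw [wNorm, EuclideanSpace.norm_eq, ← Real.sqrt_div (by positivity)]
  simp [Real.norm_eq_abs, sq_abs]

lemma wNorm_sub_le_wNorm_sub_add_wNorm_sub (u v w : Fin m → ℝ) :
    wNorm (fun j => u j - w j) ≤ wNorm (fun j => u j - v j) + wNorm (fun j => v j - w j) := by
  simp only [wNorm_eq_norm_div_sqrt, ← add_div]
  gcongr
  calc ‖WithLp.toLp 2 fun j => u j - w j‖
      = ‖WithLp.toLp 2 (fun j => u j - v j) + WithLp.toLp 2 fun j => v j - w j‖ := by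
        rw [← WithLp.toLp_add]; congr 2; ext j; simp
    _ ≤ _ := norm_add_le _ _

lemma wNorm_le_of_forall_abs_le {v : Fin m → ℝ} {c : ℝ} (hc : 0 ≤ c) (h : ∀ j, |v j| ≤ c) :
    wNorm v ≤ c := by
  rcases Nat.eq_zero_or_pos m with rfl | hm
  · simpa [wNorm] using hc
  rw [wNorm, Real.sqrt_le_left hc, div_le_iff₀ (by positivity)]
  calc ∑ j, v j ^ 2 ≤ ∑ _j : Fin m, c ^ 2 :=
        Finset.sum_le_sum fun j _ => sq_le_sq' (abs_le.mp (h j)).1 (abs_le.mp (h j)).2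
    _ = c ^ 2 * m := by simp [mul_comm]

lemma wNorm_map_sub_le_norm_sub {X : Type*} [NormedAddCommGroup X] [NormedSpace ℝ X]
    {lam : Fin m → X →L[ℝ] ℝ} (hlam : ∀ j, ‖lam j‖ ≤ 1) (x y : X) :
    wNorm (fun j => lam j x - lam j y) ≤ ‖x - y‖ :=
  wNorm_le_of_forall_abs_le (norm_nonneg _) fun j => by
    simpa [← map_sub] using (lam j).le_of_opNorm_le (hlam j) (x - y)

end WeightedNorm

lemma norm_sub_le_two_mul_chebRad {X : Type*} [NormedAddCommGroup X] {S : Set X}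
    (hS : Bornology.IsBounded S) {x y : X} (hx : x ∈ S) (hy : y ∈ S) :
    ‖x - y‖ ≤ 2 * chebRad S := by
  suffices ‖x - y‖ / 2 ≤ chebRad S by linarith
  refine le_ciInf fun z => ?_
  have hbdd : BddAbove (Set.range fun u : S => ‖(u : X) - z‖) := by
    obtain ⟨r, hr⟩ := hS.subset_closedBall z
    exact ⟨r, by rintro _ ⟨u, rfl⟩; simpa [dist_eq_norm] using hr u.2⟩
  have hxz := le_ciSup hbdd ⟨x, hx⟩
  have hyz := le_ciSup hbdd ⟨y, hy⟩
  have := norm_sub_le_norm_sub_add_norm_sub x z y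
  rw [norm_sub_rev z y] at this
  linarith

lemma exists_norm_le_one_norm_map_sub_le {X Y : Type*} [NormedAddCommGroup X] [NormedSpace ℝ X]
    [NormedAddCommGroup Y] [NormedSpace ℝ Y] {ι : Y →ₗ[ℝ] X} {C₀ : ℝ}
    (hC₀ : ∀ g : Y, ‖ι g‖ ≤ C₀ * ‖g‖) {g : Y} {r : ℝ} (hg : ‖g‖ ≤ r) :
    ∃ g' : Y, ‖g'‖ ≤ 1 ∧ ‖ι g - ι g'‖ ≤ max 0 (C₀ * (r - 1)) := by
  rcases le_or_gt ‖g‖ 1 with hg1 | hg1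
  · exact ⟨g, hg1, by simp⟩
  have hgpos : 0 < ‖g‖ := one_pos.trans hg1
  have hC₀0 : 0 ≤ C₀ := nonneg_of_mul_nonneg_left ((norm_nonneg _).trans (hC₀ g)) hgpos
  refine ⟨‖g‖⁻¹ • g, by simp [norm_smul, hgpos.ne'], le_max_of_le_right ?_⟩
  have hcoef : 0 ≤ 1 - ‖g‖⁻¹ := sub_nonneg.mpr (inv_le_one_of_one_le₀ hg1.le)
  calc ‖ι g - ι (‖g‖⁻¹ • g)‖ = (1 - ‖g‖⁻¹) * ‖ι g‖ := by
        rw [map_smul, ← Real.norm_of_nonneg hcoef, ← norm_smul, sub_smul, one_smul]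
    _ ≤ (1 - ‖g‖⁻¹) * (C₀ * ‖g‖) := by gcongr; exact hC₀ g
    _ = C₀ * (‖g‖ - 1) := by field_simp
    _ ≤ C₀ * (r - 1) := by gcongr

lemma le_rpow_one_div_of_rpow_le {a b p : ℝ} (ha : 0 ≤ a) (hb : 0 ≤ b) (hp : 0 < p)
    (h : a ^ p ≤ b) : a ≤ b ^ (1 / p) := by
  rwa [one_div, Real.le_rpow_inv_iff_of_pos ha hb hp]

lemma le_rpow_one_div_and_le_rpow_one_div_of_loss_le {a b α β μ : ℝ} (ha : 0 ≤ a) (hb : 0 ≤ b)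
    (hα : 0 < α) (hβ : 0 < β) (hμ : 0 < μ) (h : a ^ α + μ * b ^ β ≤ μ ^ 2 + μ) :
    a ≤ (μ ^ 2 + μ) ^ (1 / α) ∧ b ≤ (1 + μ) ^ (1 / β) := by
  have hpa := Real.rpow_nonneg ha α
  have hpb := Real.rpow_nonneg hb β
  exact ⟨le_rpow_one_div_of_rpow_le ha (by positivity) hα (by nlinarith),
    le_rpow_one_div_of_rpow_le hb (by positivity) hβ (le_of_mul_le_mul_left (by linarith) hμ)⟩

theorem stmt_12_general
    {X Y : Type*} [NormedAddCommGroup X] [NormedSpace ℝ X]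
    [NormedAddCommGroup Y] [NormedSpace ℝ Y]
    {m : ℕ}
    (lam : Fin m → X →L[ℝ] ℝ) (hlam : ∀ j, ‖lam j‖ ≤ 1)
    (ι : Y →ₗ[ℝ] X)
    (C₀ : ℝ) (hC₀ : ∀ g : Y, ‖ι g‖ ≤ C₀ * ‖g‖)
    (hK : IsCompact (ι '' {g : Y | ‖g‖ ≤ 1}))
    (α β : ℝ) (hα : 0 < α) (hβ : 0 < β)
    (Sig : Set X) (δ μ ϵ : ℝ) (hμ : 0 < μ)
    (hϵδ : ϵ ≤ δ ^ α) (hδμ : δ ^ α ≤ μ ^ 2 / 2)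
    (happrox : ∀ f ∈ ι '' {g : Y | ‖g‖ ≤ 1},
      ∃ g ∈ Sig ∩ ι '' {g : Y | ‖g‖ ≤ 1}, ‖f - g‖ ≤ δ)
    (f : X) (hf : f ∈ ι '' {g : Y | ‖g‖ ≤ 1})
    (ftil : Y)
    (hmin : ∀ h : Y, ι h ∈ Sig →
      wNorm (fun j => lam j (ι ftil) - lam j f) ^ α + μ * ‖ftil‖ ^ β ≤
        wNorm (fun j => lam j (ι h) - lam j f) ^ α + μ * ‖h‖ ^ β + ϵ) :
    ‖f - ι ftil‖ ≤
      max (C₀ * ((1 + μ) ^ (1 / β) - 1)) ((μ ^ 2 + μ) ^ (1 / α)) +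
      2 * chebRad {u ∈ ι '' {g : Y | ‖g‖ ≤ 1} |
        wNorm (fun j => lam j u - lam j f) ≤
          2 * max (C₀ * ((1 + μ) ^ (1 / β) - 1)) ((μ ^ 2 + μ) ^ (1 / α))} := by
  set E := max (C₀ * ((1 + μ) ^ (1 / β) - 1)) ((μ ^ 2 + μ) ^ (1 / α))
  have hE0 : 0 ≤ E := le_max_of_le_right (Real.rpow_nonneg (by positivity) _)
  obtain ⟨_, ⟨hhSig, h, hh1, rfl⟩, hfh⟩ := happrox f hf
  have hfit_h : wNorm (fun j => lam j (ι h) - lam j f) ^ α ≤ δ ^ α :=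
    Real.rpow_le_rpow (wNorm_nonneg _)
      ((wNorm_map_sub_le_norm_sub hlam _ _).trans (norm_sub_rev f _ ▸ hfh)) hα.le
  have hreg_h : μ * ‖h‖ ^ β ≤ μ :=
    mul_le_of_le_one_right hμ.le (Real.rpow_le_one (norm_nonneg _) hh1 hβ.le)
  obtain ⟨hfit, hreg⟩ := le_rpow_one_div_and_le_rpow_one_div_of_loss_le
    (wNorm_nonneg fun j => lam j (ι ftil) - lam j f) (norm_nonneg ftil) hα hβ hμ
    (by linarith [hmin h hhSig])
  obtain ⟨g, hg1, hdist⟩ := exists_norm_le_one_norm_map_sub_le hC₀ hreg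
  replace hdist : ‖ι ftil - ι g‖ ≤ E := hdist.trans (max_le hE0 (le_max_left _ _))
  set S := {u ∈ ι '' {g : Y | ‖g‖ ≤ 1} | wNorm (fun j => lam j u - lam j f) ≤ 2 * E}
  have hbdd : Bornology.IsBounded S := hK.isBounded.subset (Set.sep_subset _ _)
  have hf_mem : f ∈ S :=
    ⟨hf, wNorm_le_of_forall_abs_le (by positivity) fun j => by simpa using hE0⟩
  have hg_mem : ι g ∈ S := by
    refine ⟨⟨g, hg1, rfl⟩, ?_⟩
    have htri := wNorm_sub_le_wNorm_sub_add_wNorm_sub (fun j => lam j (ι g))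
      (fun j => lam j (ι ftil)) (fun j => lam j f)
    have hlip := wNorm_map_sub_le_norm_sub hlam (ι g) (ι ftil)
    rw [norm_sub_rev] at hlip
    linarith [hfit.trans (le_max_right (C₀ * ((1 + μ) ^ (1 / β) - 1)) _)]
  calc ‖f - ι ftil‖ ≤ ‖f - ι g‖ + ‖ι g - ι ftil‖ := norm_sub_le_norm_sub_add_norm_sub _ _ _
    _ ≤ E + 2 * chebRad _ := by
        rw [norm_sub_rev (ι g)]
        linarith [norm_sub_le_two_mul_chebRad hbdd hf_mem hg_mem]

/-- Variant loss with powers, approximate minimizer: an `ϵ`-approximate minimizer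
of `g ↦ ‖λ(g) − w‖^α + μ‖g‖_Y^β` over `Σ`, with `ϵ ≤ δ^α ≤ μ²/2`, satisfies, with
`ε := max( C₀((1+μ)^{1/β} − 1), (μ²+μ)^{1/α} )`,
`‖f − f̃‖_X ≤ ε + 2 R(K(w, 2ε))_X`. -/
theorem stmt_12
    {X Y : Type*} [NormedAddCommGroup X] [NormedSpace ℝ X] [CompleteSpace X]
    [NormedAddCommGroup Y] [NormedSpace ℝ Y]
    {m : ℕ} (hm : 0 < m)
    (lam : Fin m → X →L[ℝ] ℝ) (hlam : ∀ j, ‖lam j‖ ≤ 1)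
    (ι : Y →ₗ[ℝ] X) (hι : Function.Injective ι)
    (C₀ : ℝ) (hC₀ : ∀ g : Y, ‖ι g‖ ≤ C₀ * ‖g‖)
    (hK : IsCompact (ι '' {g : Y | ‖g‖ ≤ 1}))
    (α β : ℝ) (hα : 0 < α) (hβ : 0 < β)
    (Sig : Set X) (δ μ ϵ : ℝ) (hδ : 0 < δ) (hμ : 0 < μ) (hϵ : 0 < ϵ)
    (hϵδ : ϵ ≤ δ ^ α) (hδμ : δ ^ α ≤ μ ^ 2 / 2)
    (happrox : ∀ f ∈ ι '' {g : Y | ‖g‖ ≤ 1},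
      ∃ g ∈ Sig ∩ ι '' {g : Y | ‖g‖ ≤ 1}, ‖f - g‖ ≤ δ)
    (f : X) (hf : f ∈ ι '' {g : Y | ‖g‖ ≤ 1})
    (ftil : Y) (hftil : ι ftil ∈ Sig)
    (hmin : ∀ h : Y, ι h ∈ Sig →
      wNorm (fun j => lam j (ι ftil) - lam j f) ^ α + μ * ‖ftil‖ ^ β ≤
        wNorm (fun j => lam j (ι h) - lam j f) ^ α + μ * ‖h‖ ^ β + ϵ) :
    ‖f - ι ftil‖ ≤
      max (C₀ * ((1 + μ) ^ (1 / β) - 1)) ((μ ^ 2 + μ) ^ (1 / α)) +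
      2 * chebRad {u ∈ ι '' {g : Y | ‖g‖ ≤ 1} |
        wNorm (fun j => lam j u - lam j f) ≤
          2 * max (C₀ * ((1 + μ) ^ (1 / β) - 1)) ((μ ^ 2 + μ) ^ (1 / α))} :=
  stmt_12_general lam hlam ι C₀ hC₀ hK α β hα hβ Sig δ μ ϵ hμ hϵδ hδμ happrox f hf ftil hmin
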